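/- Let M ∈ ℝ^{n×n} be symmetric positive definite, let G ∈ ℝ^{n×m} have full column rank, let b, ψ*, ψ ∈ ℝⁿ and λ ∈ ℝᵐ satisfy M ψ + G λ = b and G^⊤ ψ = G^⊤ ψ*. If ψ* = M^{-1} b, then λ = 0 and ψ = ψ* hold for any solution of the system; conversely, if λ = 0 then G^⊤ (M^{-1} b − ψ*) = 0. In particular, when the intermediate mesh field equals the local ℓ²-projection M^{-1} b of the particle data, the Lagrange multiplier of the PDE-constrained particle–mesh projection vanishes identically. -/

import Mathlib

/-!
Eliminating the state, `ψ = M⁻¹ (b - G λ)`, turns the constraint into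
`Gᵀ M⁻¹ G λ = Gᵀ (M⁻¹ b - ψ*)`. Since `M⁻¹` is positive definite, `Gᵀ M⁻¹ G λ = 0` forces
`G λ = 0`, hence `λ = 0` by full column rank.
-/

open Matrix

theorem Matrix.PosDef.mulVec_eq_zero_of_conjTranspose_mulVec_mulVec_eq_zero
    {K n m : Type*} [Field K] [PartialOrder K] [StarRing K] [Fintype n] [Fintype m]
    {A : Matrix n n K} (hA : A.PosDef) (G : Matrix n m K) {c : m → K}
    (h : Gᴴ *ᵥ (A *ᵥ (G *ᵥ c)) = 0) : G *ᵥ c = 0 := by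
  by_contra hne
  have hpos := hA.dotProduct_mulVec_pos hne
  rw [star_mulVec, ← dotProduct_mulVec, h, dotProduct_zero] at hpos
  exact hpos.false

theorem Matrix.eq_inv_mulVec_sub_of_mulVec_add_mulVec_eq
    {K n m : Type*} [Field K] [Fintype n] [DecidableEq n] [Fintype m]
    {M : Matrix n n K} (hM : IsUnit M.det) {G : Matrix n m K} {ψ b : n → K} {c : m → K}
    (h : M *ᵥ ψ + G *ᵥ c = b) : ψ = M⁻¹ *ᵥ (b - G *ᵥ c) := by
  rw [← h, add_sub_cancel_right, mulVec_mulVec, nonsing_inv_mul M hM, one_mulVec]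

/-- Consistency of the fully-discrete PDE-constrained particle–mesh
projection: if the intermediate mesh field equals the local ℓ²-projection
`M⁻¹ b` of the particle data, then the Lagrange multiplier vanishes and the
state equals the intermediate field; conversely, if the multiplier vanishes
then `Gᵀ(M⁻¹ b − ψ*) = 0`. -/
theorem stmt_12 (n m : ℕ) (M : Matrix (Fin n) (Fin n) ℝ) (hM : M.PosDef)
    (G : Matrix (Fin n) (Fin m) ℝ)
    (hG : ∀ c : Fin m → ℝ, G.mulVec c = 0 → c = 0)
    (b ψs ψ : Fin n → ℝ) (lam : Fin m → ℝ)
    (hsys1 : M.mulVec ψ + G.mulVec lam = b)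
    (hsys2 : Gᵀ.mulVec ψ = Gᵀ.mulVec ψs) :
    (ψs = M⁻¹.mulVec b → lam = 0 ∧ ψ = ψs)
    ∧ (lam = 0 → Gᵀ.mulVec (M⁻¹.mulVec b - ψs) = 0) := by
  have hψ := eq_inv_mulVec_sub_of_mulVec_add_mulVec_eq
    ((isUnit_iff_isUnit_det M).mp hM.isUnit) hsys1
  rw [mulVec_sub] at hψ
  refine ⟨fun hψs => ?_, fun hlam => ?_⟩
  · have hGlam : G *ᵥ lam = 0 := by
      refine hM.inv.mulVec_eq_zero_of_conjTranspose_mulVec_mulVec_eq_zero G ?_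
      rw [conjTranspose_eq_transpose_of_trivial]
      simpa [hψ, hψs, mulVec_sub] using hsys2
    rw [hψ, hGlam, mulVec_zero, sub_zero, hψs]
    exact ⟨hG lam hGlam, rfl⟩
  · rw [hψ, hlam, mulVec_zero, mulVec_zero, sub_zero] at hsys2
    rw [mulVec_sub, hsys2, sub_self]
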